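/- Let A be a P-matrix (hence invertible), Ω₂ + M_{Ω₁} + φ_{Ω₁} invertible, and |ζ(u) − ζ(v)| ≤ Ψ|u − v| entrywise for all u, v ∈ ℝ^n with Ψ ≥ 0. Suppose S < 1, where S = ‖(Ω₂ + M_{Ω₁} + φ_{Ω₁})⁻¹‖₂·(‖N_{Ω₁} + φ_{Ω₁}‖₂ + ‖A_{Ω₁} − Ω₂‖₂ + 2‖|A|Ψ|A⁻¹|Ω₂‖₂), with ‖·‖₂ the spectral (operator 2-) norm. Let x*, z* satisfy Az* = γ⁻¹Ω₂(|x*| − x*) − q and the fixed-point equation (Ω₂ + M_{Ω₁} + φ_{Ω₁})x* = (N_{Ω₁} + φ_{Ω₁})x* + (Ω₂ − A_{Ω₁})|x*| − γAζ(z*) − γq. Then for every initial vector x^(0) the sequence x^(k) generated by Method 3.1 converges to x* and z^(k) converges to z*, which solves ICP(q,A,ζ). -/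

import Mathlib

open Matrix Filter Topology

noncomputable section

variable {n : ℕ}

/-- entrywise absolute value of a vector -/
def vecAbs (x : Fin n → ℝ) : Fin n → ℝ := fun i => |x i|

/-- entrywise absolute value of a matrix -/
def matAbs (A : Matrix (Fin n) (Fin n) ℝ) : Matrix (Fin n) (Fin n) ℝ :=
  Matrix.of fun i j => |A i j|

/-- positive diagonal matrix -/
def PosDiag (Ω : Matrix (Fin n) (Fin n) ℝ) : Prop := Ω.IsDiag ∧ ∀ i, 0 < Ω i i

/-- comparison matrix ⟨A⟩ -/
def compMat (A : Matrix (Fin n) (Fin n) ℝ) : Matrix (Fin n) (Fin n) ℝ :=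
  Matrix.of fun i j => if i = j then |A i j| else -|A i j|

/-- Z-matrix: nonpositive off-diagonal entries -/
def IsZmat (A : Matrix (Fin n) (Fin n) ℝ) : Prop := ∀ i j, i ≠ j → A i j ≤ 0

/-- nonsingular M-matrix: a Z-matrix, invertible, with entrywise nonnegative inverse -/
def IsMmat (A : Matrix (Fin n) (Fin n) ℝ) : Prop :=
  IsZmat A ∧ IsUnit A ∧ ∀ i j, 0 ≤ A⁻¹ i j

/-- H₊-matrix: comparison matrix is a nonsingular M-matrix, positive diagonal entries -/
def IsHplus (A : Matrix (Fin n) (Fin n) ℝ) : Prop :=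
  IsMmat (compMat A) ∧ ∀ i, 0 < A i i

/-- P-matrix: all principal minors are positive -/
def IsPmat (A : Matrix (Fin n) (Fin n) ℝ) : Prop :=
  ∀ s : Finset (Fin n),
    0 < (A.submatrix (fun i : {i // i ∈ s} => (i : Fin n))
          (fun i : {i // i ∈ s} => (i : Fin n))).det

/-- spectral radius, via the complex spectrum -/
def specRad (A : Matrix (Fin n) (Fin n) ℝ) : ℝ :=
  sSup ((fun μ : ℂ => ‖μ‖) '' spectrum ℂ (A.map Complex.ofReal))

/-- spectral (operator 2-) norm -/
def spec2Norm (A : Matrix (Fin n) (Fin n) ℝ) : ℝ :=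
  ‖Matrix.toEuclideanCLM (𝕜 := ℝ) A‖

/-- strict diagonal dominance -/
def SDD (A : Matrix (Fin n) (Fin n) ℝ) : Prop :=
  ∀ i, (∑ j ∈ Finset.univ.erase i, |A i j|) < |A i i|

/-- `z` solves the implicit complementarity problem ICP(q, A, ζ) -/
def SolvesICP (A : Matrix (Fin n) (Fin n) ℝ) (q : Fin n → ℝ)
    (ζ : (Fin n → ℝ) → (Fin n → ℝ)) (z : Fin n → ℝ) : Prop :=
  (∀ i, 0 ≤ (A.mulVec z + q) i) ∧ (∀ i, 0 ≤ (z - ζ z) i) ∧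
    (z - ζ z) ⬝ᵥ (A.mulVec z + q) = 0

/-- the sequences `x`, `z` are produced by Method 3.1 -/
def Method31 (A M N φ Ω₁ Ω₂ : Matrix (Fin n) (Fin n) ℝ) (q : Fin n → ℝ)
    (ζ : (Fin n → ℝ) → (Fin n → ℝ)) (γ : ℝ) (x z : ℕ → Fin n → ℝ) : Prop :=
  (∀ k, A *ᵥ z k = γ⁻¹ • (Ω₂ *ᵥ (vecAbs (x k) - x k)) - q) ∧
  (∀ k, x (k+1) = (Ω₂ + M * Ω₁ + φ * Ω₁)⁻¹ *ᵥ
      ((N * Ω₁ + φ * Ω₁) *ᵥ x k + (Ω₂ - A * Ω₁) *ᵥ vecAbs (x k)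
        - γ • (A *ᵥ ζ (z k)) - γ • q))
/-- Euclidean (ℓ²) norm of a plain vector -/
def vnorm (v : Fin n → ℝ) : ℝ := ‖((WithLp.equiv 2 _).symm v : EuclideanSpace ℝ (Fin n))‖

lemma vnorm_nonneg (v : Fin n → ℝ) : 0 ≤ vnorm v := norm_nonneg _

lemma vnorm_eq (v : Fin n → ℝ) : vnorm v = Real.sqrt (∑ i, v i ^ 2) := by
  rw [vnorm, EuclideanSpace.norm_eq]
  simp [Real.norm_eq_abs, sq_abs]

lemma vnorm_mulVec_le (B : Matrix (Fin n) (Fin n) ℝ) (v : Fin n → ℝ) :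
    vnorm (B *ᵥ v) ≤ spec2Norm B * vnorm v := by
  have h : ((WithLp.equiv 2 _).symm (B *ᵥ v) : EuclideanSpace ℝ (Fin n)) =
      Matrix.toEuclideanCLM (𝕜 := ℝ) B ((WithLp.equiv 2 _).symm v) := by
    rfl
  rw [vnorm, h]
  exact (Matrix.toEuclideanCLM (𝕜 := ℝ) B).le_opNorm _

lemma vnorm_add_le (u v : Fin n → ℝ) : vnorm (u + v) ≤ vnorm u + vnorm v := by
  simpa [vnorm] using norm_add_le ((WithLp.equiv 2 _).symm u : EuclideanSpace ℝ (Fin n))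
    ((WithLp.equiv 2 _).symm v)

lemma vnorm_smul (c : ℝ) (v : Fin n → ℝ) : vnorm (c • v) = |c| * vnorm v := by
  simpa [vnorm, Real.norm_eq_abs] using
    norm_smul c ((WithLp.equiv 2 _).symm v : EuclideanSpace ℝ (Fin n))

lemma vnorm_mono (u v : Fin n → ℝ) (h : ∀ i, |u i| ≤ |v i|) : vnorm u ≤ vnorm v := by
  rw [vnorm_eq, vnorm_eq]
  apply Real.sqrt_le_sqrt
  apply Finset.sum_le_sum
  intro i _
  calc u i ^ 2 = |u i| ^ 2 := (sq_abs _).symm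
    _ ≤ |v i| ^ 2 := by
        apply pow_le_pow_left₀ (abs_nonneg _) (h i) 2
    _ = v i ^ 2 := sq_abs _

lemma vnorm_le_of_abs_le (u v : Fin n → ℝ) (h : ∀ i, |u i| ≤ v i) : vnorm u ≤ vnorm v := by
  refine vnorm_mono u v fun i => ?_
  have := h i
  have h0 : 0 ≤ v i := le_trans (abs_nonneg _) this
  rwa [abs_of_nonneg h0]

lemma abs_le_vnorm (v : Fin n → ℝ) (i : Fin n) : |v i| ≤ vnorm v := by
  rw [vnorm_eq]
  rw [← Real.sqrt_sq_eq_abs]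
  apply Real.sqrt_le_sqrt
  exact Finset.single_le_sum (f := fun j => v j ^ 2) (fun j _ => sq_nonneg _) (Finset.mem_univ i)

lemma spec2Norm_nonneg (B : Matrix (Fin n) (Fin n) ℝ) : 0 ≤ spec2Norm B := norm_nonneg _

lemma spec2Norm_neg (B : Matrix (Fin n) (Fin n) ℝ) : spec2Norm (-B) = spec2Norm B := by
  rw [spec2Norm, spec2Norm, map_neg, norm_neg]

lemma abs_mulVec_le (B : Matrix (Fin n) (Fin n) ℝ) (v : Fin n → ℝ) (i : Fin n) :
    |(B *ᵥ v) i| ≤ (matAbs B *ᵥ vecAbs v) i := by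
  simp only [Matrix.mulVec, dotProduct, matAbs, vecAbs, Matrix.of_apply]
  calc |∑ j, B i j * v j| ≤ ∑ j, |B i j * v j| := Finset.abs_sum_le_sum_abs _ _
    _ = ∑ j, |B i j| * |v j| := by simp [abs_mul]

lemma mulVec_mono (B : Matrix (Fin n) (Fin n) ℝ) (hB : ∀ i j, 0 ≤ B i j)
    (u v : Fin n → ℝ) (h : ∀ i, u i ≤ v i) (i : Fin n) : (B *ᵥ u) i ≤ (B *ᵥ v) i := by
  simp only [Matrix.mulVec, dotProduct]
  apply Finset.sum_le_sum
  intro j _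
  exact mul_le_mul_of_nonneg_left (h j) (hB i j)

lemma diag_mulVec (Ω : Matrix (Fin n) (Fin n) ℝ) (hΩ : Ω.IsDiag) (v : Fin n → ℝ) (i : Fin n) :
    (Ω *ᵥ v) i = Ω i i * v i := by
  rw [Matrix.mulVec, dotProduct]
  rw [Finset.sum_eq_single i]
  · intro j _ hj
    rw [hΩ (Ne.symm hj), zero_mul]
  · intro h; exact absurd (Finset.mem_univ i) h

lemma cont_mulVec (B : Matrix (Fin n) (Fin n) ℝ) : Continuous fun v : Fin n → ℝ => B *ᵥ v := by
  apply continuous_pi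
  intro i
  simp only [Matrix.mulVec, dotProduct]
  exact continuous_finset_sum _ fun j _ => (continuous_const.mul (continuous_apply j))

lemma cont_vecAbs : Continuous fun v : Fin n → ℝ => vecAbs v := by
  apply continuous_pi
  intro i
  exact (continuous_apply i).abs
lemma key_identity (A M N φ Ω₁ Ω₂ : Matrix (Fin n) (Fin n) ℝ) (q : Fin n → ℝ)
    (ζ : (Fin n → ℝ) → (Fin n → ℝ)) (γ : ℝ) (hγ : 0 < γ)
    (hsplit : A = (M + φ) - (N + φ)) (hdetA : IsUnit A.det)
    (xs zs : Fin n → ℝ)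
    (hzs : A *ᵥ zs = γ⁻¹ • (Ω₂ *ᵥ (vecAbs xs - xs)) - q)
    (hfix : (Ω₂ + M * Ω₁ + φ * Ω₁) *ᵥ xs =
      (N * Ω₁ + φ * Ω₁) *ᵥ xs + (Ω₂ - A * Ω₁) *ᵥ vecAbs xs - γ • (A *ᵥ ζ zs) - γ • q) :
    Ω₁ *ᵥ (xs + vecAbs xs) = γ • (zs - ζ zs) := by
  have hAinv : ∀ v : Fin n → ℝ, A⁻¹ *ᵥ (A *ᵥ v) = v := fun v => by
    rw [Matrix.mulVec_mulVec, Matrix.nonsing_inv_mul _ hdetA, Matrix.one_mulVec]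
  have hMN : A * Ω₁ = M * Ω₁ - N * Ω₁ := by rw [hsplit]; noncomm_ring
  have h1 : γ • (A *ᵥ zs) = Ω₂ *ᵥ (vecAbs xs - xs) - γ • q := by
    rw [hzs, smul_sub, smul_smul, mul_inv_cancel₀ hγ.ne', one_smul]
  have h2 : γ • (A *ᵥ ζ zs) = (N * Ω₁ + φ * Ω₁) *ᵥ xs + (Ω₂ - A * Ω₁) *ᵥ vecAbs xs
      - (Ω₂ + M * Ω₁ + φ * Ω₁) *ᵥ xs - γ • q := by
    rw [hfix]; abel
  have hkey0 : A *ᵥ (Ω₁ *ᵥ (xs + vecAbs xs)) = A *ᵥ (γ • (zs - ζ zs)) := by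
    rw [Matrix.mulVec_mulVec, Matrix.mulVec_smul, Matrix.mulVec_sub, smul_sub, h1, h2, hMN]
    simp only [Matrix.sub_mulVec, Matrix.add_mulVec, Matrix.mulVec_add, Matrix.mulVec_sub]
    abel
  have h3 := congrArg (fun v => A⁻¹ *ᵥ v) hkey0
  simp only [hAinv] at h3
  exact h3
theorem stmt7 (A M N φ Ω₁ Ω₂ Ψ : Matrix (Fin n) (Fin n) ℝ)
    (q : Fin n → ℝ) (ζ : (Fin n → ℝ) → (Fin n → ℝ)) (γ : ℝ)
    (hγ : 0 < γ) (hΩ₁ : PosDiag Ω₁) (hΩ₂ : PosDiag Ω₂) (hφ : φ.IsDiag)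
    (hsplit : A = (M + φ) - (N + φ))
    (hP : IsPmat A)
    (hA : IsUnit A) (hW : IsUnit (Ω₂ + M * Ω₁ + φ * Ω₁))
    (hΨ : ∀ i j, 0 ≤ Ψ i j)
    (hLip : ∀ u v : Fin n → ℝ, ∀ i, |(ζ u - ζ v) i| ≤ (Ψ *ᵥ vecAbs (u - v)) i)
    (x z : ℕ → Fin n → ℝ) (hmthd : Method31 A M N φ Ω₁ Ω₂ q ζ γ x z)
    (xs zs : Fin n → ℝ)
    (hzs : A *ᵥ zs = γ⁻¹ • (Ω₂ *ᵥ (vecAbs xs - xs)) - q)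
    (hfix : (Ω₂ + M * Ω₁ + φ * Ω₁) *ᵥ xs =
      (N * Ω₁ + φ * Ω₁) *ᵥ xs + (Ω₂ - A * Ω₁) *ᵥ vecAbs xs
        - γ • (A *ᵥ ζ zs) - γ • q)
    (hS : spec2Norm (Ω₂ + M * Ω₁ + φ * Ω₁)⁻¹ *
      (spec2Norm (N * Ω₁ + φ * Ω₁) + spec2Norm (A * Ω₁ - Ω₂)
        + 2 * spec2Norm (matAbs A * Ψ * matAbs A⁻¹ * Ω₂)) < 1) :
    Tendsto x atTop (𝓝 xs) ∧ Tendsto z atTop (𝓝 zs) ∧ SolvesICP A q ζ zs := by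
  obtain ⟨hm1, hm2⟩ := hmthd
  have hγ' : γ ≠ 0 := hγ.ne'
  have hdetA : IsUnit A.det := (Matrix.isUnit_iff_isUnit_det A).mp hA
  have hdetW : IsUnit (Ω₂ + M * Ω₁ + φ * Ω₁).det := (Matrix.isUnit_iff_isUnit_det _).mp hW
  have hAinv : ∀ v : Fin n → ℝ, A⁻¹ *ᵥ (A *ᵥ v) = v := by
    intro v
    rw [Matrix.mulVec_mulVec, Matrix.nonsing_inv_mul _ hdetA, Matrix.one_mulVec]
  have hWinv : ∀ v : Fin n → ℝ,
      (Ω₂ + M * Ω₁ + φ * Ω₁)⁻¹ *ᵥ ((Ω₂ + M * Ω₁ + φ * Ω₁) *ᵥ v) = v := by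
    intro v
    rw [Matrix.mulVec_mulVec, Matrix.nonsing_inv_mul _ hdetW, Matrix.one_mulVec]
  set B : Matrix (Fin n) (Fin n) ℝ := matAbs A * Ψ * matAbs A⁻¹ * Ω₂ with hBdef
  set S : ℝ := spec2Norm (Ω₂ + M * Ω₁ + φ * Ω₁)⁻¹ *
      (spec2Norm (N * Ω₁ + φ * Ω₁) + spec2Norm (A * Ω₁ - Ω₂) + 2 * spec2Norm B) with hSdef
  have hS0 : 0 ≤ S := by
    apply mul_nonneg (spec2Norm_nonneg _)
    have := spec2Norm_nonneg (N * Ω₁ + φ * Ω₁)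
    have := spec2Norm_nonneg (A * Ω₁ - Ω₂)
    have := spec2Norm_nonneg B
    linarith
  -- matAbs of Ω₂ is itself
  have hΩ₂nn : ∀ i j, 0 ≤ Ω₂ i j := by
    intro i j
    by_cases h : i = j
    · subst h; exact (hΩ₂.2 i).le
    · rw [hΩ₂.1 h]
  -- key contraction step
  have hstep : ∀ k, vnorm (x (k+1) - xs) ≤ S * vnorm (x k - xs) := by
    intro k
    set e : Fin n → ℝ := x k - xs with hedef
    set t : Fin n → ℝ := vecAbs e with htdef
    have htabs : ∀ i, |t i| = |e i| := fun i => abs_abs (e i)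
    have htnonneg : ∀ i, 0 ≤ t i := fun i => abs_nonneg _
    have hvnorm_t : vnorm t = vnorm e := by
      rw [vnorm_eq, vnorm_eq]
      congr 1
      apply Finset.sum_congr rfl
      intro i _
      simp [htdef, vecAbs, sq_abs]
    -- difference of z's
    set d : Fin n → ℝ := (vecAbs (x k) - x k) - (vecAbs xs - xs) with hddef
    have hzd : z k - zs = γ⁻¹ • (A⁻¹ *ᵥ (Ω₂ *ᵥ d)) := by
      have h : A *ᵥ (z k - zs) = γ⁻¹ • (Ω₂ *ᵥ d) := by
        rw [Matrix.mulVec_sub, hm1 k, hzs, hddef]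
        simp only [Matrix.mulVec_sub, smul_sub]
        abel
      rw [← hAinv (z k - zs), h, Matrix.mulVec_smul]
    have hd2 : ∀ i, |d i| ≤ 2 * t i := by
      intro i
      have h1 : d i = (|x k i| - |xs i|) - (x k i - xs i) := by
        simp [hddef, vecAbs]
        ring
      have h3 : t i = |x k i - xs i| := rfl
      rw [h1, h3]
      set a : ℝ := |x k i| - |xs i| with ha
      have h2 : |a| ≤ |x k i - xs i| := abs_abs_sub_abs_le_abs_sub _ _
      have h4 : |a - (x k i - xs i)| ≤ |a| + |x k i - xs i| := abs_sub _ _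
      linarith
    -- entrywise bound |Ω₂ d| ≤ Ω₂ (2 t)
    have hOd : ∀ i, |(Ω₂ *ᵥ d) i| ≤ (Ω₂ *ᵥ (2 • t)) i := by
      intro i
      calc |(Ω₂ *ᵥ d) i| ≤ (matAbs Ω₂ *ᵥ vecAbs d) i := abs_mulVec_le _ _ _
        _ = (Ω₂ *ᵥ vecAbs d) i := by
            congr 1
            ext a b
            exact abs_of_nonneg (hΩ₂nn a b)
        _ ≤ (Ω₂ *ᵥ (2 • t)) i := by
            apply mulVec_mono Ω₂ hΩ₂nn
            intro j
            simpa [vecAbs] using hd2 j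
    have hmatAbsnn : ∀ (C : Matrix (Fin n) (Fin n) ℝ) i j, 0 ≤ matAbs C i j := by
      intro C i j; exact abs_nonneg _
    -- entrywise bound on z k - zs
    have hzb : ∀ i, |(z k - zs) i| ≤ γ⁻¹ * ((matAbs A⁻¹ *ᵥ (Ω₂ *ᵥ (2 • t))) i) := by
      intro i
      rw [hzd]
      have : |(γ⁻¹ • (A⁻¹ *ᵥ (Ω₂ *ᵥ d))) i| = γ⁻¹ * |(A⁻¹ *ᵥ (Ω₂ *ᵥ d)) i| := by
        rw [Pi.smul_apply, smul_eq_mul, abs_mul, abs_of_nonneg (inv_nonneg.mpr hγ.le)]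
      rw [this]
      apply mul_le_mul_of_nonneg_left _ (inv_nonneg.mpr hγ.le)
      calc |(A⁻¹ *ᵥ (Ω₂ *ᵥ d)) i| ≤ (matAbs A⁻¹ *ᵥ vecAbs (Ω₂ *ᵥ d)) i := abs_mulVec_le _ _ _
        _ ≤ (matAbs A⁻¹ *ᵥ (Ω₂ *ᵥ (2 • t))) i := by
            apply mulVec_mono _ (hmatAbsnn _)
            intro j
            exact hOd j
    -- entrywise bound on ζ difference
    have hζb : ∀ i, |(ζ (z k) - ζ zs) i| ≤ γ⁻¹ * ((Ψ *ᵥ (matAbs A⁻¹ *ᵥ (Ω₂ *ᵥ (2 • t)))) i) := by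
      intro i
      calc |(ζ (z k) - ζ zs) i| ≤ (Ψ *ᵥ vecAbs (z k - zs)) i := hLip _ _ i
        _ ≤ (Ψ *ᵥ (γ⁻¹ • (matAbs A⁻¹ *ᵥ (Ω₂ *ᵥ (2 • t))))) i := by
            apply mulVec_mono _ hΨ
            intro j
            simpa [vecAbs] using hzb j
        _ = γ⁻¹ * ((Ψ *ᵥ (matAbs A⁻¹ *ᵥ (Ω₂ *ᵥ (2 • t)))) i) := by
            rw [Matrix.mulVec_smul, Pi.smul_apply, smul_eq_mul]
    -- final entrywise bound
    have hfinal : ∀ i, |(γ • (A *ᵥ (ζ (z k) - ζ zs))) i| ≤ (2 • (B *ᵥ t)) i := by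
      intro i
      have h1 : |(γ • (A *ᵥ (ζ (z k) - ζ zs))) i| = γ * |(A *ᵥ (ζ (z k) - ζ zs)) i| := by
        rw [Pi.smul_apply, smul_eq_mul, abs_mul, abs_of_nonneg hγ.le]
      rw [h1]
      have h2 : |(A *ᵥ (ζ (z k) - ζ zs)) i| ≤
          γ⁻¹ * ((matAbs A *ᵥ (Ψ *ᵥ (matAbs A⁻¹ *ᵥ (Ω₂ *ᵥ (2 • t))))) i) := by
        calc |(A *ᵥ (ζ (z k) - ζ zs)) i| ≤ (matAbs A *ᵥ vecAbs (ζ (z k) - ζ zs)) i :=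
              abs_mulVec_le _ _ _
          _ ≤ (matAbs A *ᵥ (γ⁻¹ • (Ψ *ᵥ (matAbs A⁻¹ *ᵥ (Ω₂ *ᵥ (2 • t)))))) i := by
              apply mulVec_mono _ (hmatAbsnn _)
              intro j
              simpa [vecAbs] using hζb j
          _ = γ⁻¹ * ((matAbs A *ᵥ (Ψ *ᵥ (matAbs A⁻¹ *ᵥ (Ω₂ *ᵥ (2 • t))))) i) := by
              rw [Matrix.mulVec_smul, Pi.smul_apply, smul_eq_mul]
      calc γ * |(A *ᵥ (ζ (z k) - ζ zs)) i|
          ≤ γ * (γ⁻¹ * ((matAbs A *ᵥ (Ψ *ᵥ (matAbs A⁻¹ *ᵥ (Ω₂ *ᵥ (2 • t))))) i)) :=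
            mul_le_mul_of_nonneg_left h2 hγ.le
        _ = (matAbs A *ᵥ (Ψ *ᵥ (matAbs A⁻¹ *ᵥ (Ω₂ *ᵥ (2 • t))))) i := by
            rw [← mul_assoc, mul_inv_cancel₀ hγ', one_mul]
        _ = ((matAbs A * Ψ * matAbs A⁻¹ * Ω₂) *ᵥ (2 • t)) i := by
            rw [Matrix.mulVec_mulVec, Matrix.mulVec_mulVec, Matrix.mulVec_mulVec]
        _ = (2 • (B *ᵥ t)) i := by
            rw [hBdef, Matrix.mulVec_smul]
    -- vnorm of third term
    have hthird : vnorm (γ • (A *ᵥ (ζ (z k) - ζ zs))) ≤ 2 * (spec2Norm B * vnorm e) := by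
      calc vnorm (γ • (A *ᵥ (ζ (z k) - ζ zs))) ≤ vnorm (2 • (B *ᵥ t)) :=
            vnorm_le_of_abs_le _ _ hfinal
        _ = 2 * vnorm (B *ᵥ t) := by
            have := vnorm_smul (2 : ℝ) (B *ᵥ t)
            rw [show (2 • (B *ᵥ t)) = (2:ℝ) • (B *ᵥ t) by ext i; simp [nsmul_eq_mul], this, abs_two]
        _ ≤ 2 * (spec2Norm B * vnorm t) := by
            have := vnorm_mulVec_le B t
            linarith
        _ = 2 * (spec2Norm B * vnorm e) := by rw [hvnorm_t]
    -- fixed point form of xs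
    have hxs : xs = (Ω₂ + M * Ω₁ + φ * Ω₁)⁻¹ *ᵥ
        ((N * Ω₁ + φ * Ω₁) *ᵥ xs + (Ω₂ - A * Ω₁) *ᵥ vecAbs xs
          - γ • (A *ᵥ ζ zs) - γ • q) := by
      conv_lhs => rw [← hWinv xs, hfix]
    have he : x (k+1) - xs = (Ω₂ + M * Ω₁ + φ * Ω₁)⁻¹ *ᵥ
        ((N * Ω₁ + φ * Ω₁) *ᵥ e + (Ω₂ - A * Ω₁) *ᵥ (vecAbs (x k) - vecAbs xs)
          - γ • (A *ᵥ (ζ (z k) - ζ zs))) := by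
      conv_lhs => rw [hm2 k, hxs]
      rw [hedef]
      simp only [Matrix.mulVec_add, Matrix.mulVec_sub, Matrix.mulVec_smul, smul_sub]
      abel
    have habs2 : ∀ i, |(vecAbs (x k) - vecAbs xs) i| ≤ |e i| := by
      intro i
      simpa [vecAbs, hedef] using abs_abs_sub_abs_le_abs_sub (x k i) (xs i)
    have hsecond : vnorm ((Ω₂ - A * Ω₁) *ᵥ (vecAbs (x k) - vecAbs xs)) ≤
        spec2Norm (A * Ω₁ - Ω₂) * vnorm e := by
      have h1 : spec2Norm (Ω₂ - A * Ω₁) = spec2Norm (A * Ω₁ - Ω₂) := by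
        rw [show Ω₂ - A * Ω₁ = -(A * Ω₁ - Ω₂) from (neg_sub _ _).symm, spec2Norm_neg]
      calc vnorm ((Ω₂ - A * Ω₁) *ᵥ (vecAbs (x k) - vecAbs xs))
          ≤ spec2Norm (Ω₂ - A * Ω₁) * vnorm (vecAbs (x k) - vecAbs xs) := vnorm_mulVec_le _ _
        _ ≤ spec2Norm (A * Ω₁ - Ω₂) * vnorm e := by
            rw [h1]
            exact mul_le_mul_of_nonneg_left (vnorm_mono _ _ habs2) (spec2Norm_nonneg _)
    have hfirst : vnorm ((N * Ω₁ + φ * Ω₁) *ᵥ e) ≤ spec2Norm (N * Ω₁ + φ * Ω₁) * vnorm e :=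
      vnorm_mulVec_le _ _
    have htri : vnorm ((N * Ω₁ + φ * Ω₁) *ᵥ e + (Ω₂ - A * Ω₁) *ᵥ (vecAbs (x k) - vecAbs xs)
          - γ • (A *ᵥ (ζ (z k) - ζ zs))) ≤
        (spec2Norm (N * Ω₁ + φ * Ω₁) + spec2Norm (A * Ω₁ - Ω₂) + 2 * spec2Norm B) * vnorm e := by
      have hneg : vnorm (-(γ • (A *ᵥ (ζ (z k) - ζ zs)))) = vnorm (γ • (A *ᵥ (ζ (z k) - ζ zs))) := by
        rw [show -(γ • (A *ᵥ (ζ (z k) - ζ zs))) = (-1 : ℝ) • (γ • (A *ᵥ (ζ (z k) - ζ zs))) by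
          simp, vnorm_smul]
        simp
      calc vnorm ((N * Ω₁ + φ * Ω₁) *ᵥ e + (Ω₂ - A * Ω₁) *ᵥ (vecAbs (x k) - vecAbs xs)
            - γ • (A *ᵥ (ζ (z k) - ζ zs)))
          = vnorm (((N * Ω₁ + φ * Ω₁) *ᵥ e + (Ω₂ - A * Ω₁) *ᵥ (vecAbs (x k) - vecAbs xs))
            + (-(γ • (A *ᵥ (ζ (z k) - ζ zs))))) := by rw [sub_eq_add_neg]
        _ ≤ vnorm ((N * Ω₁ + φ * Ω₁) *ᵥ e + (Ω₂ - A * Ω₁) *ᵥ (vecAbs (x k) - vecAbs xs))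
            + vnorm (-(γ • (A *ᵥ (ζ (z k) - ζ zs)))) := vnorm_add_le _ _
        _ ≤ vnorm ((N * Ω₁ + φ * Ω₁) *ᵥ e) + vnorm ((Ω₂ - A * Ω₁) *ᵥ (vecAbs (x k) - vecAbs xs))
            + vnorm (γ • (A *ᵥ (ζ (z k) - ζ zs))) := by
            have := vnorm_add_le ((N * Ω₁ + φ * Ω₁) *ᵥ e)
              ((Ω₂ - A * Ω₁) *ᵥ (vecAbs (x k) - vecAbs xs))
            rw [hneg]
            linarith
        _ ≤ (spec2Norm (N * Ω₁ + φ * Ω₁) + spec2Norm (A * Ω₁ - Ω₂) + 2 * spec2Norm B)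
            * vnorm e := by
            rw [add_mul, add_mul]
            have h2 : 2 * spec2Norm B * vnorm e = 2 * (spec2Norm B * vnorm e) := by ring
            rw [h2]
            exact add_le_add (add_le_add hfirst hsecond) hthird
    calc vnorm (x (k+1) - xs) ≤ spec2Norm (Ω₂ + M * Ω₁ + φ * Ω₁)⁻¹ *
          vnorm ((N * Ω₁ + φ * Ω₁) *ᵥ e + (Ω₂ - A * Ω₁) *ᵥ (vecAbs (x k) - vecAbs xs)
            - γ • (A *ᵥ (ζ (z k) - ζ zs))) := by
          rw [he]; exact vnorm_mulVec_le _ _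
      _ ≤ spec2Norm (Ω₂ + M * Ω₁ + φ * Ω₁)⁻¹ *
          ((spec2Norm (N * Ω₁ + φ * Ω₁) + spec2Norm (A * Ω₁ - Ω₂) + 2 * spec2Norm B)
            * vnorm e) := mul_le_mul_of_nonneg_left htri (spec2Norm_nonneg _)
      _ = S * vnorm e := by rw [hSdef]; ring
  -- iterate the contraction
  have hiter : ∀ k, vnorm (x k - xs) ≤ S ^ k * vnorm (x 0 - xs) := by
    intro k
    induction k with
    | zero => simp
    | succ k ih =>
        calc vnorm (x (k+1) - xs) ≤ S * vnorm (x k - xs) := hstep k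
          _ ≤ S * (S ^ k * vnorm (x 0 - xs)) := mul_le_mul_of_nonneg_left ih hS0
          _ = S ^ (k+1) * vnorm (x 0 - xs) := by ring
  have hlim : Tendsto (fun k => vnorm (x k - xs)) atTop (𝓝 0) := by
    have h1 : Tendsto (fun k : ℕ => S ^ k * vnorm (x 0 - xs)) atTop (𝓝 0) := by
      have h2 := tendsto_pow_atTop_nhds_zero_of_lt_one hS0 hS
      simpa using h2.mul_const (vnorm (x 0 - xs))
    exact squeeze_zero (fun k => vnorm_nonneg _) hiter h1
  have hx : Tendsto x atTop (𝓝 xs) := by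
    rw [tendsto_pi_nhds]
    intro i
    rw [tendsto_iff_dist_tendsto_zero]
    apply squeeze_zero (fun k => dist_nonneg) (fun k => ?_) hlim
    rw [Real.dist_eq]
    exact abs_le_vnorm (x k - xs) i
  -- convergence of z
  have hzfun : Continuous (fun v : Fin n → ℝ =>
      A⁻¹ *ᵥ (γ⁻¹ • (Ω₂ *ᵥ (vecAbs v - v)) - q)) := by
    apply (cont_mulVec A⁻¹).comp
    exact (((cont_mulVec Ω₂).comp (cont_vecAbs.sub continuous_id)).const_smul γ⁻¹).sub
      continuous_const
  have hzk : z = fun k => A⁻¹ *ᵥ (γ⁻¹ • (Ω₂ *ᵥ (vecAbs (x k) - x k)) - q) := by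
    funext k
    rw [← hm1 k, hAinv]
  have hzsf : zs = A⁻¹ *ᵥ (γ⁻¹ • (Ω₂ *ᵥ (vecAbs xs - xs)) - q) := by
    rw [← hzs, hAinv]
  have hz : Tendsto z atTop (𝓝 zs) := by
    rw [hzk, hzsf]
    exact (hzfun.tendsto xs).comp hx
  refine ⟨hx, hz, ?_, ?_, ?_⟩
  · -- A zs + q ≥ 0
    intro i
    have h1 : A *ᵥ zs + q = γ⁻¹ • (Ω₂ *ᵥ (vecAbs xs - xs)) := by rw [hzs]; abel
    rw [h1, Pi.smul_apply, smul_eq_mul, diag_mulVec Ω₂ hΩ₂.1]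
    have h2 : (vecAbs xs - xs) i = |xs i| - xs i := rfl
    rw [h2]
    have h3 : 0 ≤ |xs i| - xs i := by linarith [le_abs_self (xs i)]
    exact mul_nonneg (inv_nonneg.mpr hγ.le) (mul_nonneg (hΩ₂.2 i).le h3)
  · -- zs - ζ zs ≥ 0
    intro i
    have hkey := key_identity A M N φ Ω₁ Ω₂ q ζ γ hγ hsplit hdetA xs zs hzs hfix
    have h1 := congrFun hkey i
    rw [diag_mulVec Ω₁ hΩ₁.1, Pi.smul_apply, smul_eq_mul] at h1
    have h2 : (xs + vecAbs xs) i = xs i + |xs i| := rfl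
    rw [h2] at h1
    have h3 : 0 ≤ xs i + |xs i| := by linarith [neg_abs_le (xs i)]
    nlinarith [hΩ₁.2 i, mul_nonneg (hΩ₁.2 i).le h3]
  · -- complementarity
    have hkey := key_identity A M N φ Ω₁ Ω₂ q ζ γ hγ hsplit hdetA xs zs hzs hfix
    rw [dotProduct]
    apply Finset.sum_eq_zero
    intro i _
    have h1 := congrFun hkey i
    rw [diag_mulVec Ω₁ hΩ₁.1, Pi.smul_apply, smul_eq_mul] at h1
    have h2 : (xs + vecAbs xs) i = xs i + |xs i| := rfl
    rw [h2] at h1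
    have hq1 : A *ᵥ zs + q = γ⁻¹ • (Ω₂ *ᵥ (vecAbs xs - xs)) := by rw [hzs]; abel
    have h3 : (A *ᵥ zs + q) i = γ⁻¹ * (Ω₂ i i * (|xs i| - xs i)) := by
      rw [hq1, Pi.smul_apply, smul_eq_mul, diag_mulVec Ω₂ hΩ₂.1]
      rfl
    have h4 : (zs - ζ zs) i = γ⁻¹ * (Ω₁ i i * (xs i + |xs i|)) := by
      rw [h1, ← mul_assoc, inv_mul_cancel₀ hγ', one_mul]
    rw [h3, h4]
    rcases abs_cases (xs i) with ⟨h, _⟩ | ⟨h, _⟩ <;> rw [h] <;> ring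
end
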